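/- arXiv:1404.3453 — 2 statements merged into one kernel-verified Lean document; each statement's English description precedes it below -/
import Mathlib

section
/- Let d, m ≥ 1, let Π : Fin m → (d×d complex matrices) be Hermitian positive semidefinite with ∑_ξ Π_ξ = I, let ρ be Hermitian positive definite with tr ρ = 1, set p_ξ := tr(Π_ξ ρ) > 0, let F(X) = ∑_ξ p_ξ⁻¹ tr(Π_ξ X) Π_ξ on Hermitian matrices, and assume F is bijective. Define Π̄_ξ := Π_ξ − (tr Π_ξ / d)·I and F̄(X) := ∑_ξ p_ξ⁻¹ tr(Π̄_ξ X) Π̄_ξ. Then for every Hermitian matrix X with tr X = 0 one has F⁻¹(F̄(X)) − tr(ρ · F̄(X)) · ρ = X; that is, the map X ↦ F⁻¹(X) − tr(ρX)ρ is a left inverse of F̄ on the space of traceless Hermitian matrices. -/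
open Matrix ComplexOrder
open scoped BigOperators

/-!
Since `∑ ξ, P ξ = 1` and `p ξ = tr(P ξ ρ)`, the frame superoperator fixes the identity through `ρ`:
`F ρ = 1`. On a traceless `X` one has `tr(P̄ ξ X) = tr(P ξ X)`, so `F̄ X = F X - c • 1 = F (X - c • ρ)`
for a scalar `c`, whence `F⁻¹ (F̄ X) = X - c • ρ`. Finally `tr(ρ F Y) = tr Y` for every `Y`,
so `tr(ρ F̄ X) = tr(X - c • ρ) = -c`, and the correction term restores `X`.
-/

namespace Matrix

variable {ι n R : Type*} [Fintype ι] [Fintype n] [CommRing R]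

def frameOp (P : ι → Matrix n n R) (w : ι → R) : Matrix n n R →ₗ[R] Matrix n n R where
  toFun X := ∑ ξ, (w ξ * (P ξ * X).trace) • P ξ
  map_add' X Y := by
    simp only [trace_add, mul_add, add_smul, Finset.sum_add_distrib]
  map_smul' c X := by
    simp only [Matrix.mul_smul, trace_smul, smul_eq_mul, RingHom.id_apply, Finset.smul_sum,
      smul_smul, mul_left_comm]

theorem frameOp_apply (P : ι → Matrix n n R) (w : ι → R) (X : Matrix n n R) :
    frameOp P w X = ∑ ξ, (w ξ * (P ξ * X).trace) • P ξ :=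
  rfl

variable {P : ι → Matrix n n R} {w : ι → R} {ρ : Matrix n n R}

theorem frameOp_eq_sum_of_mul_trace_eq_one (h : ∀ ξ, w ξ * (P ξ * ρ).trace = 1) :
    frameOp P w ρ = ∑ ξ, P ξ := by
  simp only [frameOp_apply, h, one_smul]

theorem trace_mul_frameOp (h : ∀ ξ, w ξ * (P ξ * ρ).trace = 1) (X : Matrix n n R) :
    (ρ * frameOp P w X).trace = ((∑ ξ, P ξ) * X).trace := by
  simp only [frameOp_apply, Matrix.mul_sum, trace_sum, Finset.sum_mul, Matrix.mul_smul,
    trace_smul, smul_eq_mul]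
  refine Finset.sum_congr rfl fun ξ _ => ?_
  rw [trace_mul_comm ρ, mul_right_comm, h, one_mul]

theorem frameOp_sub_smul_one [DecidableEq n] (s : ι → R) {X : Matrix n n R}
    (hX : X.trace = 0) :
    frameOp (fun ξ => P ξ - s ξ • 1) w X
      = frameOp P w X - (∑ ξ, w ξ * (P ξ * X).trace * s ξ) • 1 := by
  have htr : ∀ ξ, ((P ξ - s ξ • 1) * X).trace = (P ξ * X).trace := fun ξ => by
    rw [Matrix.sub_mul, trace_sub, smul_mul, Matrix.one_mul, trace_smul, hX, smul_zero,
      sub_zero]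
  simp only [frameOp_apply, htr, smul_sub, smul_smul, Finset.sum_sub_distrib, Finset.sum_smul]

end Matrix

theorem stmt_5_general (d m : ℕ)
    (P : Fin m → Matrix (Fin d) (Fin d) ℂ)
    (hPsum : ∑ ξ, P ξ = 1)
    (ρ : Matrix (Fin d) (Fin d) ℂ) (hρtr : ρ.trace = 1)
    (p : Fin m → ℝ) (hp : ∀ ξ, (p ξ : ℂ) = (P ξ * ρ).trace) (hppos : ∀ ξ, 0 < p ξ)
    (F G : Matrix (Fin d) (Fin d) ℂ → Matrix (Fin d) (Fin d) ℂ)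
    (hF : ∀ X, F X = ∑ ξ, (((p ξ : ℂ))⁻¹ * (P ξ * X).trace) • P ξ)
    (hGF : ∀ X, G (F X) = X)
    (Pbar : Fin m → Matrix (Fin d) (Fin d) ℂ)
    (hPbar : ∀ ξ, Pbar ξ = P ξ - ((P ξ).trace / d) • 1)
    (Fbar : Matrix (Fin d) (Fin d) ℂ → Matrix (Fin d) (Fin d) ℂ)
    (hFbar : ∀ X, Fbar X = ∑ ξ, (((p ξ : ℂ))⁻¹ * (Pbar ξ * X).trace) • Pbar ξ) :
    ∀ X : Matrix (Fin d) (Fin d) ℂ, X.IsHermitian → X.trace = 0 →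
      G (Fbar X) - ((ρ * Fbar X).trace) • ρ = X := by
  intro X _ hXtr
  have hw : ∀ ξ, (p ξ : ℂ)⁻¹ * (P ξ * ρ).trace = 1 := fun ξ => by
    rw [← hp]
    exact inv_mul_cancel₀ (by exact_mod_cast (hppos ξ).ne')
  have hF' : F = frameOp P (fun ξ => (p ξ : ℂ)⁻¹) := funext hF
  have hFbar' : Fbar = frameOp (fun ξ => P ξ - ((P ξ).trace / d) • 1) (fun ξ => (p ξ : ℂ)⁻¹) :=
    funext fun Y => by simp only [hFbar, hPbar, frameOp_apply]
  set c := ∑ ξ, (p ξ : ℂ)⁻¹ * (P ξ * X).trace * ((P ξ).trace / d)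
  have hFbarX : Fbar X = F (X - c • ρ) := by
    rw [hFbar', frameOp_sub_smul_one _ hXtr, hF', map_sub, map_smul,
      frameOp_eq_sum_of_mul_trace_eq_one hw, hPsum]
  rw [hFbarX, hGF, hF', trace_mul_frameOp hw, hPsum, Matrix.one_mul, trace_sub, trace_smul,
    hXtr, hρtr, smul_eq_mul, mul_one, zero_sub, neg_smul, sub_neg_eq_add, sub_add_cancel]

/-- The map `X ↦ F⁻¹(X) - tr(ρX)•ρ` is a left inverse of the traceless frame
superoperator `F̄(X) = ∑ ξ, p ξ⁻¹ tr(P̄ ξ X) • P̄ ξ`, where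
`P̄ ξ = P ξ - (tr(P ξ)/d)•1`, on the space of traceless Hermitian matrices:
the paper's identity `F̄(ρ)⁺ = F(ρ)⁻¹ - |ρ⟩⟩⟨⟨ρ|`. -/
theorem stmt_5 (d m : ℕ) (hd : 1 ≤ d) (hm : 1 ≤ m)
    (P : Fin m → Matrix (Fin d) (Fin d) ℂ)
    (hP : ∀ ξ, (P ξ).PosSemidef) (hPsum : ∑ ξ, P ξ = 1)
    (ρ : Matrix (Fin d) (Fin d) ℂ) (hρ : ρ.PosDef) (hρtr : ρ.trace = 1)
    (p : Fin m → ℝ) (hp : ∀ ξ, (p ξ : ℂ) = (P ξ * ρ).trace) (hppos : ∀ ξ, 0 < p ξ)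
    (F G : Matrix (Fin d) (Fin d) ℂ → Matrix (Fin d) (Fin d) ℂ)
    (hF : ∀ X, F X = ∑ ξ, (((p ξ : ℂ))⁻¹ * (P ξ * X).trace) • P ξ)
    (hGF : ∀ X, G (F X) = X) (hFG : ∀ X, F (G X) = X)
    (Pbar : Fin m → Matrix (Fin d) (Fin d) ℂ)
    (hPbar : ∀ ξ, Pbar ξ = P ξ - ((P ξ).trace / d) • 1)
    (Fbar : Matrix (Fin d) (Fin d) ℂ → Matrix (Fin d) (Fin d) ℂ)
    (hFbar : ∀ X, Fbar X = ∑ ξ, (((p ξ : ℂ))⁻¹ * (Pbar ξ * X).trace) • Pbar ξ) :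
    ∀ X : Matrix (Fin d) (Fin d) ℂ, X.IsHermitian → X.trace = 0 →
      G (Fbar X) - ((ρ * Fbar X).trace) • ρ = X :=
  stmt_5_general d m P hPsum ρ hρtr p hp hppos F G hF hGF Pbar hPbar Fbar hFbar
end

section
/- Let d ≥ 1 and let ψ : Fin d² → ℂᵈ be unit vectors satisfying |⟨ψ_ξ, ψ_ζ⟩|² = (d·δ_{ξζ} + 1)/(d + 1) for all ξ, ζ. Then for every d×d Hermitian complex matrix ρ with tr ρ = 1, ρ = ∑_ξ (⟨ψ_ξ, ρ ψ_ξ⟩/d) · ((d+1)·|ψ_ξ⟩⟨ψ_ξ| − I), where |ψ_ξ⟩⟨ψ_ξ| denotes the rank-one matrix ψ_ξ ψ_ξᴴ. -/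
/-!
The rank-one projectors `P ξ = ψ ξ (ψ ξ)ᴴ` have trace Gram matrix `(d • 1 + J)/(d + 1)`, which
is nonsingular, so the `d²` of them are linearly independent and hence span all `d × d` matrices.
As `tr (P ξ * Θ ζ) = d δ`, the matrices `Θ ζ / d` form the basis dual to the `P ξ` under the trace
pairing, and expanding a matrix in that dual basis is the reconstruction formula.
-/

open Matrix

theorem linearIndependent_of_bilin_apply_eq {K V ι : Type*} [Field K] [AddCommGroup V]
    [Module K V] [Fintype ι] [DecidableEq ι] (B : V →ₗ[K] V →ₗ[K] K) {v : ι → V} {a b : K}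
    (hB : ∀ i j, B (v i) (v j) = a * (if i = j then 1 else 0) + b) (ha : a ≠ 0)
    (hab : a + Fintype.card ι * b ≠ 0) : LinearIndependent K v := by
  rw [Fintype.linearIndependent_iff]
  intro g hg
  have hpair : ∀ i, a * g i + b * ∑ j, g j = 0 := fun i => by
    have := congr_arg (B (v i)) hg
    simp only [map_sum, map_smul, smul_eq_mul, hB, map_zero] at this
    simpa [mul_add, Finset.sum_add_distrib, Finset.mul_sum, mul_comm, mul_left_comm] using this
  have hsum : ∑ j, g j = 0 := by
    have := Finset.sum_congr rfl fun i (_ : i ∈ Finset.univ) => hpair i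
    simp only [Finset.sum_add_distrib, ← Finset.mul_sum, Finset.sum_const, Finset.card_univ,
      nsmul_eq_mul] at this
    have : (a + Fintype.card ι * b) * ∑ j, g j = 0 := by linear_combination this
    exact (mul_eq_zero.mp this).resolve_left hab
  intro i
  simpa [hsum, ha] using hpair i

namespace Matrix

variable {R ι n : Type*} [Fintype n]

theorem trace_vecMulVec_mul [CommSemiring R] (u v : n → R) (A : Matrix n n R) :
    (vecMulVec u v * A).trace = v ⬝ᵥ (A *ᵥ u) := by
  rw [vecMulVec_mul, trace_vecMulVec, dotProduct_mulVec, dotProduct_comm]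

theorem trace_vecMulVec_star_mul_vecMulVec_star {𝕜 : Type*} [RCLike 𝕜] (u v : n → 𝕜) :
    (vecMulVec u (star u) * vecMulVec v (star v)).trace = ((‖star u ⬝ᵥ v‖ ^ 2 : ℝ) : 𝕜) := by
  rw [vecMulVec_mul_vecMulVec, trace_vecMulVec, dotProduct_smul, dotProduct_star,
    dotProduct_comm v, smul_eq_mul, RCLike.star_def]
  exact_mod_cast RCLike.mul_conj (star u ⬝ᵥ v)

theorem eq_of_forall_trace_mul_eq [CommRing R] {P : ι → Matrix n n R}
    (hP : Submodule.span R (Set.range P) = ⊤) {A B : Matrix n n R}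
    (h : ∀ i, (P i * A).trace = (P i * B).trace) : A = B := by
  refine ext_iff_trace_mul_left.2 fun X => ?_
  have := LinearMap.ext_on_range hP (f := (traceLinearMap n R R).comp (LinearMap.mulRight R A))
    (g := (traceLinearMap n R R).comp (LinearMap.mulRight R B)) h
  exact LinearMap.congr_fun this X

theorem eq_sum_trace_mul_smul_of_dual [CommRing R] [Fintype ι] [DecidableEq ι]
    {P Θ : ι → Matrix n n R} (hP : Submodule.span R (Set.range P) = ⊤)
    (hdual : ∀ i j, (P i * Θ j).trace = if i = j then 1 else 0) (A : Matrix n n R) :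
    A = ∑ j, (P j * A).trace • Θ j :=
  eq_of_forall_trace_mul_eq hP fun i => by
    simp [Matrix.mul_sum, trace_sum, hdual]

end Matrix

/-- Exact linear state reconstruction from a SIC measurement:
`ρ = ∑ ξ, (⟨ψ ξ, ρ ψ ξ⟩ / d) • ((d+1) • |ψ ξ⟩⟨ψ ξ| - 1)` for every Hermitian `ρ`
with unit trace. -/
theorem stmt_8 (d : ℕ) (hd : 1 ≤ d) (ψ : Fin (d ^ 2) → Fin d → ℂ)
    (hunit : ∀ ξ, star (ψ ξ) ⬝ᵥ ψ ξ = 1)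
    (hsic : ∀ ξ ζ, ‖star (ψ ξ) ⬝ᵥ ψ ζ‖ ^ 2 =
      ((d : ℝ) * (if ξ = ζ then 1 else 0) + 1) / (d + 1)) :
    ∀ ρ : Matrix (Fin d) (Fin d) ℂ, ρ.IsHermitian → ρ.trace = 1 →
      ρ = ∑ ξ, ((star (ψ ξ) ⬝ᵥ (ρ *ᵥ ψ ξ)) / d) •
        (((d : ℂ) + 1) • vecMulVec (ψ ξ) (star (ψ ξ)) - 1) := by
  intro ρ _ _
  set P : Fin (d ^ 2) → Matrix (Fin d) (Fin d) ℂ := fun ξ => vecMulVec (ψ ξ) (star (ψ ξ))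
  have hd0 : (d : ℂ) ≠ 0 := by exact_mod_cast (by omega : d ≠ 0)
  have hd1 : (d : ℂ) + 1 ≠ 0 := by exact_mod_cast d.succ_ne_zero
  have hgram : ∀ ξ ζ, (P ξ * P ζ).trace = d / (d + 1) * (if ξ = ζ then 1 else 0) + 1 / (d + 1) :=
    fun ξ ζ => by
      rw [trace_vecMulVec_star_mul_vecMulVec_star, hsic]
      split_ifs <;> push_cast <;> ring
  have hspan : Submodule.span ℂ (Set.range P) = ⊤ := by
    refine LinearIndependent.span_eq_top_of_card_eq_finrank' ?_
      (by simp [Module.finrank_matrix, sq])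
    refine linearIndependent_of_bilin_apply_eq
      ((LinearMap.mul ℂ _).compr₂ (traceLinearMap (Fin d) ℂ ℂ)) hgram
      (div_ne_zero hd0 hd1) ?_
    convert hd0 using 1
    push_cast [Fintype.card_fin]
    field_simp
    ring
  have hdual : ∀ ξ ζ, (P ξ * ((d : ℂ)⁻¹ • (((d : ℂ) + 1) • P ζ - 1))).trace =
      if ξ = ζ then 1 else 0 := fun ξ ζ => by
    rw [Matrix.mul_smul, Matrix.mul_sub, Matrix.mul_smul, Matrix.mul_one, trace_smul, trace_sub,
      trace_smul, hgram, trace_vecMulVec, dotProduct_comm, hunit, smul_eq_mul, smul_eq_mul]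
    split_ifs <;> field_simp <;> ring
  refine (eq_sum_trace_mul_smul_of_dual hspan hdual ρ).trans
    (Finset.sum_congr rfl fun ξ _ => ?_)
  rw [smul_smul, trace_vecMulVec_mul, div_eq_mul_inv]
end
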